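/- arXiv:1904.12957 — 3 statements merged into one kernel-verified Lean document; each statement's English description precedes it below -/
import Mathlib

section
/- Let g_P = ρ* + v*/V'(ρ*) (the proportional control gain). Suppose (ρ̃, ṽ) is a classical solution of the linearized ARZ model satisfying the collocated P-control boundary conditions q̃(0,t) = g_P · ṽ(0,t) (inlet ramp-metering control) and q̃(L,t) = 0 (constant outlet flow) for all t ≥ 0. Then ρ̃(x,t) = 0 and ṽ(x,t) = 0 for every x ∈ [0,L] and every t ≥ L/λ₁ + L/(−λ₂); that is, the equilibrium is reached in the finite time L/|λ₁| + L/|λ₂|. -/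
open Real Set Topology Filter

private lemma const_of_deriv_zero_Ioc {g : ℝ → ℝ} {a b : ℝ} (hab : a < b)
    (hc : ContinuousOn g (Icc a b))
    (hd : ∀ σ ∈ Ioc a b, HasDerivAt g 0 σ) : g b = g a := by
  have key : ∀ s ∈ Ioc a b, g b = g s := by
    intro s hs
    rcases eq_or_lt_of_le hs.2 with h | h
    · rw [h]
    · have := constant_of_has_deriv_right_zero (f := g) (a := s) (b := b)
        (hc.mono (Icc_subset_Icc hs.1.le le_rfl))
        (fun σ hσ => (hd σ ⟨lt_of_lt_of_le hs.1 hσ.1, hσ.2.le⟩).hasDerivWithinAt)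
      exact this b (right_mem_Icc.mpr h.le)
  have hcl : a ∈ closure (Ioc a b) := by
    rw [closure_Ioc hab.ne]; exact left_mem_Icc.mpr hab.le
  have hne : (𝓝[Ioc a b] a).NeBot := mem_closure_iff_nhdsWithin_neBot.mp hcl
  have h1 : Filter.Tendsto g (𝓝[Ioc a b] a) (𝓝 (g a)) :=
    (hc.continuousWithinAt (left_mem_Icc.mpr hab.le)).mono Ioc_subset_Icc_self
  have h2 : Filter.Tendsto g (𝓝[Ioc a b] a) (𝓝 (g b)) := by
    refine Filter.Tendsto.congr' ?_ tendsto_const_nhds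
    filter_upwards [self_mem_nhdsWithin] with s hs using (key s hs)
  exact tendsto_nhds_unique h2 h1

private lemma slice_hasDerivAt {F : ℝ × ℝ → ℝ} {s : Set (ℝ × ℝ)}
    (hF : ContDiffOn ℝ 1 F s) {x t : ℝ} (hp : s ∈ 𝓝 (x, t)) :
    HasDerivAt (fun y => F (y, t)) (fderiv ℝ F (x, t) (1, 0)) x ∧
    HasDerivAt (fun u => F (x, u)) (fderiv ℝ F (x, t) (0, 1)) t := by
  have hd : HasFDerivAt F (fderiv ℝ F (x, t)) (x, t) :=
    ((hF.contDiffAt hp).differentiableAt one_ne_zero).hasFDerivAt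
  constructor
  · have hγ : HasDerivAt (fun y : ℝ => ((y : ℝ), t)) ((1 : ℝ), (0 : ℝ)) x :=
      HasDerivAt.prodMk (hasDerivAt_id x) (hasDerivAt_const x t)
    exact hd.comp_hasDerivAt x hγ
  · have hγ : HasDerivAt (fun u : ℝ => (x, (u : ℝ))) ((0 : ℝ), (1 : ℝ)) t :=
      HasDerivAt.prodMk (hasDerivAt_const t x) (hasDerivAt_id t)
    exact hd.comp_hasDerivAt t hγ

private lemma char_hasDerivAt {F : ℝ × ℝ → ℝ} {s : Set (ℝ × ℝ)}
    (hF : ContDiffOn ℝ 1 F s) (c x0 : ℝ) {σ : ℝ} (hp : s ∈ 𝓝 (x0 + c * σ, σ)) :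
    HasDerivAt (fun u => F (x0 + c * u, u))
      (c * fderiv ℝ F (x0 + c * σ, σ) (1, 0) + fderiv ℝ F (x0 + c * σ, σ) (0, 1)) σ := by
  have hd : HasFDerivAt F (fderiv ℝ F (x0 + c * σ, σ)) (x0 + c * σ, σ) :=
    ((hF.contDiffAt hp).differentiableAt one_ne_zero).hasFDerivAt
  have hγ : HasDerivAt (fun u : ℝ => (x0 + c * u, u)) ((c : ℝ), (1 : ℝ)) σ := by
    have h1 : HasDerivAt (fun u : ℝ => x0 + c * u) c σ := by
      simpa using ((hasDerivAt_id σ).const_mul c).const_add x0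
    exact HasDerivAt.prodMk h1 (hasDerivAt_id σ)
  have h : HasDerivAt (F ∘ fun u : ℝ => (x0 + c * u, u))
      (fderiv ℝ F (x0 + c * σ, σ) ((c : ℝ), (1 : ℝ))) σ :=
    HasFDerivAt.comp_hasDerivAt σ hd hγ
  have hval : fderiv ℝ F (x0 + c * σ, σ) (c, 1)
      = c * fderiv ℝ F (x0 + c * σ, σ) (1, 0) + fderiv ℝ F (x0 + c * σ, σ) (0, 1) := by
    have he : ((c : ℝ), (1 : ℝ)) = c • ((1 : ℝ), (0 : ℝ)) + ((0 : ℝ), (1 : ℝ)) := by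
      simp [Prod.ext_iff]
    rw [he, map_add, map_smul, smul_eq_mul]
  rw [← hval]
  exact h

private lemma zero_of_zero_on_interior {F : ℝ × ℝ → ℝ} {L c : ℝ} (hL : 0 < L) (hc : 0 ≤ c)
    (hF : ContinuousOn F (Icc 0 L ×ˢ Ici 0))
    (h0 : ∀ p ∈ Ioo (0:ℝ) L ×ˢ Ioi c, F p = 0) :
    ∀ p ∈ Icc (0:ℝ) L ×ˢ Ici c, F p = 0 := by
  intro p hp
  have hpm := ((mem_prod).mp hp)
  have hU : (Ioo (0:ℝ) L ×ˢ Ioi c) ⊆ Icc 0 L ×ˢ Ici 0 :=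
    prod_mono Ioo_subset_Icc_self (fun x hx => le_trans hc (le_of_lt hx))
  have hcl : p ∈ closure (Ioo (0:ℝ) L ×ˢ Ioi c) := by
    rw [closure_prod_eq, closure_Ioo hL.ne, closure_Ioi]
    exact hp
  have hne : (𝓝[Ioo (0:ℝ) L ×ˢ Ioi c] p).NeBot := mem_closure_iff_nhdsWithin_neBot.mp hcl
  have hps : p ∈ (Icc (0:ℝ) L ×ˢ Ici 0) := ⟨hpm.1, le_trans hc hpm.2⟩
  have h1 : Filter.Tendsto F (𝓝[Ioo (0:ℝ) L ×ˢ Ioi c] p) (𝓝 (F p)) :=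
    (hF.continuousWithinAt hps).mono hU
  have h2 : Filter.Tendsto F (𝓝[Ioo (0:ℝ) L ×ˢ Ioi c] p) (𝓝 0) := by
    refine Filter.Tendsto.congr' ?_ tendsto_const_nhds
    filter_upwards [self_mem_nhdsWithin] with q hq using (h0 q hq).symm
  exact tendsto_nhds_unique h1 h2

/-- Finite-time regulation of the linearized ARZ model under
collocated P boundary control: with inlet control `q̃(0,t) = g_P ṽ(0,t)` where
`g_P = ρ* + v*/V'(ρ*)`, and constant outlet flow `q̃(L,t) = 0`, every classical
solution vanishes identically for `t ≥ L/λ₁ + L/(−λ₂)`. -/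
theorem linearized_ARZ_P_control_finite_time
    (L τ ρs : ℝ) (hL : 0 < L) (hτ : 0 < τ) (hρs : 0 < ρs)
    (V : ℝ → ℝ) (V' : ℝ) (hV : HasDerivAt V V' ρs) (hV' : V' < 0)
    (vs : ℝ) (hvs : vs = V ρs) (hvs_pos : 0 < vs)
    (lam1 lam2 : ℝ) (hlam1 : lam1 = vs) (hlam2 : lam2 = vs + ρs * V')
    (hcong : lam2 < 0)
    (ρ v : ℝ → ℝ → ℝ)
    (hρC1 : ContDiffOn ℝ 1 (fun p : ℝ × ℝ => ρ p.1 p.2) (Icc 0 L ×ˢ Ici 0))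
    (hvC1 : ContDiffOn ℝ 1 (fun p : ℝ × ℝ => v p.1 p.2) (Icc 0 L ×ˢ Ici 0))
    (pde1 : ∀ x ∈ Icc (0:ℝ) L, ∀ t ∈ Ici (0:ℝ),
      deriv (fun s => ρ x s) t + vs * deriv (fun y => ρ y t) x
        + ρs * deriv (fun y => v y t) x = 0)
    (pde2 : ∀ x ∈ Icc (0:ℝ) L, ∀ t ∈ Ici (0:ℝ),
      deriv (fun s => v x s - V' * ρ x s) t
        + vs * deriv (fun y => v y t - V' * ρ y t) x
        = -(v x t - V' * ρ x t) / τ)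
    (bc_in : ∀ t ≥ (0:ℝ), ρs * v 0 t + vs * ρ 0 t = (ρs + vs / V') * v 0 t)
    (bc_out : ∀ t ≥ (0:ℝ), ρs * v L t + vs * ρ L t = 0) :
    ∀ x ∈ Icc (0:ℝ) L, ∀ t, L / lam1 + L / (-lam2) ≤ t →
      ρ x t = 0 ∧ v x t = 0 := by
  have hV'ne : V' ≠ 0 := ne_of_lt hV'
  have hτne : τ ≠ 0 := ne_of_gt hτ
  have hvsne : vs ≠ 0 := ne_of_gt hvs_pos
  have hμ : 0 < -lam2 := neg_pos.mpr hcong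
  have hT1pos : 0 < L / vs := div_pos hL hvs_pos
  have hWC1 : ContDiffOn ℝ 1 (fun p : ℝ × ℝ => v p.1 p.2 - V' * ρ p.1 p.2)
      (Icc 0 L ×ˢ Ici 0) := hvC1.sub (contDiffOn_const.mul hρC1)
  -- membership in nbhd filter for interior points
  have hmemS : ∀ {x t : ℝ}, x ∈ Ioo (0:ℝ) L → 0 < t →
      (Icc (0:ℝ) L ×ˢ Ici (0:ℝ) : Set (ℝ × ℝ)) ∈ 𝓝 (x, t) := by
    intro x t hx ht
    have h1 : (Ioo (0:ℝ) L ×ˢ Ioi (0:ℝ) : Set (ℝ × ℝ)) ∈ 𝓝 (x, t) :=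
      (isOpen_Ioo.prod isOpen_Ioi).mem_nhds ⟨hx, ht⟩
    exact Filter.mem_of_superset h1 (prod_mono Ioo_subset_Icc_self Ioi_subset_Ici_self)
  -- inlet boundary condition gives w(0,t) = 0
  have hw0 : ∀ t, (0:ℝ) ≤ t → v 0 t - V' * ρ 0 t = 0 := by
    intro t ht
    have h := bc_in t ht
    have h1 : vs * (V' * ρ 0 t) = vs * v 0 t := by
      field_simp at h
      linear_combination h
    have h2 := mul_left_cancel₀ hvsne h1
    linarith
  -- Step 1 (interior): w vanishes for x ∈ (0,L), t > L/vs
  have step1' : ∀ x ∈ Ioo (0:ℝ) L, ∀ t, L / vs < t →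
      v x t - V' * ρ x t = 0 := by
    intro x hx t ht
    have hxvs : 0 < x / vs := div_pos hx.1 hvs_pos
    have hxL : x / vs ≤ L / vs := by
      exact (div_le_div_iff_of_pos_right hvs_pos).mpr hx.2.le
    set a := t - x / vs with ha
    have hab : a < t := by simp only [ha]; linarith
    have hapos : 0 < a := by simp only [ha]; linarith
    set x0 := x - vs * t with hx0
    -- position along the characteristic
    have hpos : ∀ σ, a ≤ σ → σ ≤ t → 0 ≤ x0 + vs * σ ∧ x0 + vs * σ ≤ x := by
      intro σ h1 h2
      constructor
      · have : vs * a = vs * t - x := by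
          simp only [ha]; field_simp
        nlinarith [mul_le_mul_of_nonneg_left h1 hvs_pos.le]
      · nlinarith [mul_le_mul_of_nonneg_left h2 hvs_pos.le]
    set g : ℝ → ℝ := fun u => (v (x0 + vs * u) u - V' * ρ (x0 + vs * u) u)
        * Real.exp (u / τ) with hg
    have hgc : ContinuousOn g (Icc a t) := by
      have hγc : ContinuousOn (fun u : ℝ => (x0 + vs * u, u)) (Icc a t) := by fun_prop
      have hmaps : MapsTo (fun u : ℝ => (x0 + vs * u, u)) (Icc a t)
          (Icc (0:ℝ) L ×ˢ Ici (0:ℝ)) := by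
        intro σ hσ
        have h := hpos σ hσ.1 hσ.2
        exact ⟨⟨h.1, le_trans h.2 hx.2.le⟩, le_trans hapos.le hσ.1⟩
      exact (hWC1.continuousOn.comp hγc hmaps).mul
        ((Real.continuous_exp.comp (continuous_id.div_const τ)).continuousOn)
    have hgd : ∀ σ ∈ Ioc a t, HasDerivAt g 0 σ := by
      intro σ hσ
      have hσpos : 0 < σ := lt_trans hapos hσ.1
      have hgt : x > x0 + vs * σ → True := fun _ => trivial
      have hp1 : 0 < x0 + vs * σ := by
        have : vs * a = vs * t - x := by simp only [ha]; field_simp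
        nlinarith [mul_lt_mul_of_pos_left hσ.1 hvs_pos]
      have hp2 : x0 + vs * σ ≤ x := (hpos σ hσ.1.le hσ.2).2
      have hxin : x0 + vs * σ ∈ Ioo (0:ℝ) L := ⟨hp1, lt_of_le_of_lt hp2 hx.2⟩
      have hnb := hmemS hxin hσpos
      have hsl := slice_hasDerivAt hWC1 hnb
      have hpde := pde2 (x0 + vs * σ) (Ioo_subset_Icc_self hxin) σ hσpos.le
      have e1 : deriv (fun s => v (x0 + vs * σ) s - V' * ρ (x0 + vs * σ) s) σ
          = fderiv ℝ (fun p : ℝ × ℝ => v p.1 p.2 - V' * ρ p.1 p.2) (x0 + vs * σ, σ) (0, 1) :=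
        hsl.2.deriv
      have e2 : deriv (fun y => v y σ - V' * ρ y σ) (x0 + vs * σ)
          = fderiv ℝ (fun p : ℝ × ℝ => v p.1 p.2 - V' * ρ p.1 p.2) (x0 + vs * σ, σ) (1, 0) :=
        hsl.1.deriv
      rw [e1, e2] at hpde
      have hchar := char_hasDerivAt hWC1 vs x0 hnb
      have hchar' : HasDerivAt (fun u => v (x0 + vs * u) u - V' * ρ (x0 + vs * u) u)
          (-(v (x0 + vs * σ) σ - V' * ρ (x0 + vs * σ) σ) / τ) σ := by
        convert hchar using 1
        linarith
      have hexp : HasDerivAt (fun u : ℝ => Real.exp (u / τ))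
          (Real.exp (σ / τ) * (1 / τ)) σ := by
        have h1 : HasDerivAt (fun u : ℝ => u / τ) (1 / τ) σ := by
          simpa using (hasDerivAt_id σ).div_const τ
        simpa using h1.exp
      have hprod := hchar'.mul hexp
      have : (-(v (x0 + vs * σ) σ - V' * ρ (x0 + vs * σ) σ) / τ) * Real.exp (σ / τ)
          + (v (x0 + vs * σ) σ - V' * ρ (x0 + vs * σ) σ) * (Real.exp (σ / τ) * (1 / τ))
          = 0 := by field_simp; ring
      rw [this] at hprod
      exact hprod
    have hba := const_of_deriv_zero_Ioc hab hgc hgd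
    have hend : x0 + vs * t = x := by simp only [hx0]; ring
    have hstart : x0 + vs * a = 0 := by
      simp only [hx0, ha]; field_simp; ring
    have hga : g a = 0 := by
      simp only [hg, hstart]
      rw [hw0 a hapos.le]
      ring
    have hgt2 : g t = (v x t - V' * ρ x t) * Real.exp (t / τ) := by
      simp only [hg, hend]
    rw [hgt2, hga] at hba
    have := Real.exp_pos (t / τ)
    rcases mul_eq_zero.mp hba with h | h
    · exact h
    · exact absurd h (ne_of_gt this)
  -- Step 1 (closure): w vanishes for x ∈ [0,L], t ≥ L/vs
  have step1 : ∀ x ∈ Icc (0:ℝ) L, ∀ t, L / vs ≤ t → v x t - V' * ρ x t = 0 := by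
    have h := zero_of_zero_on_interior hL hT1pos.le hWC1.continuousOn
      (fun p hp => step1' p.1 hp.1 p.2 hp.2)
    intro x hx t ht
    exact h (x, t) ⟨hx, ht⟩
  -- outlet boundary: ρ(L,t) = 0 for t ≥ L/vs
  have hρL : ∀ t, L / vs ≤ t → ρ L t = 0 := by
    intro t ht
    have ht0 : (0:ℝ) ≤ t := le_trans hT1pos.le ht
    have h1 := bc_out t ht0
    have h2 : v L t - V' * ρ L t = 0 := step1 L ⟨hL.le, le_rfl⟩ t ht
    have h3 : lam2 * ρ L t = 0 := by
      rw [hlam2]; nlinarith [h1, h2]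
    exact (mul_eq_zero.mp h3).resolve_left (ne_of_lt hcong)
  -- Step 2 (interior): ρ vanishes for x ∈ (0,L), t > L/vs + L/(-lam2)
  have step2' : ∀ x ∈ Ioo (0:ℝ) L, ∀ t, L / vs + L / (-lam2) < t → ρ x t = 0 := by
    intro x hx t ht
    have hLx : 0 < (L - x) / (-lam2) := div_pos (by linarith [hx.2]) hμ
    have hLxL : (L - x) / (-lam2) ≤ L / (-lam2) := by
      exact (div_le_div_iff_of_pos_right hμ).mpr (by linarith [hx.1])
    set a := t - (L - x) / (-lam2) with ha
    have hab : a < t := by simp only [ha]; linarith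
    have haT1 : L / vs < a := by simp only [ha]; linarith
    have hapos : 0 < a := lt_trans hT1pos haT1
    set x0 := x - lam2 * t with hx0
    have hkey : lam2 * a = lam2 * t + (L - x) := by
      simp only [ha]; linear_combination div_mul_cancel₀ (L - x) hμ.ne'
    have hpos : ∀ σ, a ≤ σ → σ ≤ t → x ≤ x0 + lam2 * σ ∧ x0 + lam2 * σ ≤ L := by
      intro σ h1 h2
      constructor
      · nlinarith [mul_le_mul_of_nonpos_left h2 hcong.le]
      · nlinarith [mul_le_mul_of_nonpos_left h1 hcong.le]
    set g : ℝ → ℝ := fun u => ρ (x0 + lam2 * u) u with hg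
    have hgc : ContinuousOn g (Icc a t) := by
      have hγc : ContinuousOn (fun u : ℝ => (x0 + lam2 * u, u)) (Icc a t) := by fun_prop
      have hmaps : MapsTo (fun u : ℝ => (x0 + lam2 * u, u)) (Icc a t)
          (Icc (0:ℝ) L ×ˢ Ici (0:ℝ)) := by
        intro σ hσ
        have h := hpos σ hσ.1 hσ.2
        exact ⟨⟨le_trans hx.1.le h.1, h.2⟩, le_trans hapos.le hσ.1⟩
      exact hρC1.continuousOn.comp hγc hmaps
    have hgd : ∀ σ ∈ Ioc a t, HasDerivAt g 0 σ := by
      intro σ hσ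
      have hσT1 : L / vs < σ := lt_trans haT1 hσ.1
      have hσpos : 0 < σ := lt_trans hapos hσ.1
      have hp1 : x ≤ x0 + lam2 * σ := (hpos σ hσ.1.le hσ.2).1
      have hp2 : x0 + lam2 * σ < L := by
        nlinarith [mul_lt_mul_of_neg_left hσ.1 hcong]
      have hxin : x0 + lam2 * σ ∈ Ioo (0:ℝ) L := ⟨lt_of_lt_of_le hx.1 hp1, hp2⟩
      have hnb := hmemS hxin hσpos
      have hsl := slice_hasDerivAt hρC1 hnb
      have hpde := pde1 (x0 + lam2 * σ) (Ioo_subset_Icc_self hxin) σ hσpos.le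
      -- v_x = V' * ρ_x at this point
      have hvx : deriv (fun y => v y σ) (x0 + lam2 * σ)
          = V' * deriv (fun y => ρ y σ) (x0 + lam2 * σ) := by
        have hEq : (fun y => v y σ) =ᶠ[𝓝 (x0 + lam2 * σ)] (fun y => V' * ρ y σ) := by
          filter_upwards [Ioo_mem_nhds hxin.1 hxin.2] with y hy
          have := step1 y (Ioo_subset_Icc_self hy) σ hσT1.le
          linarith
        rw [hEq.deriv_eq, deriv_const_mul_field]
      have e1 : deriv (fun s => ρ (x0 + lam2 * σ) s) σ
          = fderiv ℝ (fun p : ℝ × ℝ => ρ p.1 p.2) (x0 + lam2 * σ, σ) (0, 1) :=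
        hsl.2.deriv
      have e2 : deriv (fun y => ρ y σ) (x0 + lam2 * σ)
          = fderiv ℝ (fun p : ℝ × ℝ => ρ p.1 p.2) (x0 + lam2 * σ, σ) (1, 0) :=
        hsl.1.deriv
      rw [hvx, e1, e2] at hpde
      have hchar := char_hasDerivAt hρC1 lam2 x0 hnb
      have hzero : lam2 * fderiv ℝ (fun p : ℝ × ℝ => ρ p.1 p.2) (x0 + lam2 * σ, σ) (1, 0)
          + fderiv ℝ (fun p : ℝ × ℝ => ρ p.1 p.2) (x0 + lam2 * σ, σ) (0, 1) = 0 := by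
        linear_combination hpde + (fderiv ℝ (fun p : ℝ × ℝ => ρ p.1 p.2) (x0 + lam2 * σ, σ) (1, 0)) * hlam2
      rw [hzero] at hchar
      exact hchar
    have hba := const_of_deriv_zero_Ioc hab hgc hgd
    have hend : x0 + lam2 * t = x := by simp only [hx0]; ring
    have hstart : x0 + lam2 * a = L := by
      simp only [hx0]
      linarith [hkey]
    have hga : g a = 0 := by
      simp only [hg, hstart]
      exact hρL a haT1.le
    have hgt2 : g t = ρ x t := by simp only [hg, hend]
    rw [hgt2, hga] at hba
    exact hba
  -- Step 2 (closure)
  have hT0 : (0:ℝ) ≤ L / vs + L / (-lam2) := by positivity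
  have step2 : ∀ x ∈ Icc (0:ℝ) L, ∀ t, L / vs + L / (-lam2) ≤ t → ρ x t = 0 := by
    have h := zero_of_zero_on_interior (F := fun p : ℝ × ℝ => ρ p.1 p.2)
      hL hT0 hρC1.continuousOn (fun p hp => step2' p.1 hp.1 p.2 hp.2)
    intro x hx t ht
    exact h (x, t) ⟨hx, ht⟩
  -- conclusion
  intro x hx t ht
  rw [hlam1] at ht
  have hρ0 : ρ x t = 0 := step2 x hx t ht
  have hT1le : L / vs ≤ t := by
    have : 0 < L / (-lam2) := div_pos hL hμ
    linarith
  have hw := step1 x hx t hT1le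
  refine ⟨hρ0, ?_⟩
  rw [hρ0] at hw
  linarith
end

section
/- Let g_P = ρ* + v*/V'(ρ*) (the proportional control gain). There exist constants C ≥ 1 and μ > 0, depending only on L, τ, ρ*, v* and V'(ρ*), such that every classical solution (ρ̃, ṽ) of the linearized ARZ model satisfying the collocated P-control boundary conditions q̃(0,t) = g_P · ṽ(0,t) and q̃(L,t) = 0 for all t ≥ 0 obeys the exponential L² decay estimate ∫₀^L (ρ̃(x,t)² + ṽ(x,t)²) dx ≤ C e^{−μ t} ∫₀^L (ρ̃(x,0)² + ṽ(x,0)²) dx for all t ≥ 0. -/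
open Real Set MeasureTheory intervalIntegral

noncomputable def ARZrect (L : ℝ) : Set (ℝ × ℝ) := Icc 0 L ×ˢ Ici 0

lemma ARZrect_uniqueDiffOn {L : ℝ} (hL : 0 < L) : UniqueDiffOn ℝ (ARZrect L) :=
  (uniqueDiffOn_Icc hL).prod (uniqueDiffOn_Ici 0)

noncomputable def pdx (f : ℝ → ℝ → ℝ) (L x t : ℝ) : ℝ :=
  fderivWithin ℝ (fun p : ℝ × ℝ => f p.1 p.2) (ARZrect L) (x, t) (1, 0)

noncomputable def pdt (f : ℝ → ℝ → ℝ) (L x t : ℝ) : ℝ :=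
  fderivWithin ℝ (fun p : ℝ × ℝ => f p.1 p.2) (ARZrect L) (x, t) (0, 1)

lemma continuousOn_pdx {L : ℝ} (hL : 0 < L) {f : ℝ → ℝ → ℝ}
    (hf : ContDiffOn ℝ 1 (fun p : ℝ × ℝ => f p.1 p.2) (ARZrect L)) :
    ContinuousOn (fun p : ℝ × ℝ => pdx f L p.1 p.2) (ARZrect L) := by
  have h := hf.continuousOn_fderivWithin (ARZrect_uniqueDiffOn hL) le_rfl
  exact h.clm_apply continuousOn_const

lemma continuousOn_pdt {L : ℝ} (hL : 0 < L) {f : ℝ → ℝ → ℝ}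
    (hf : ContDiffOn ℝ 1 (fun p : ℝ × ℝ => f p.1 p.2) (ARZrect L)) :
    ContinuousOn (fun p : ℝ × ℝ => pdt f L p.1 p.2) (ARZrect L) := by
  have h := hf.continuousOn_fderivWithin (ARZrect_uniqueDiffOn hL) le_rfl
  exact h.clm_apply continuousOn_const

lemma interior_mem {L x t : ℝ} (hx : x ∈ Ioo 0 L) (ht : 0 < t) :
    ARZrect L ∈ nhds (x, t) := by
  have hopen : IsOpen (Ioo 0 L ×ˢ Ioi (0:ℝ)) := isOpen_Ioo.prod isOpen_Ioi
  have hsub : Ioo 0 L ×ˢ Ioi (0:ℝ) ⊆ ARZrect L := by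
    intro p hp
    exact ⟨Ioo_subset_Icc_self hp.1, mem_Ici.2 (le_of_lt hp.2)⟩
  exact Filter.mem_of_superset (hopen.mem_nhds ⟨hx, ht⟩) hsub

lemma hasFDerivAt_interior {L : ℝ} (hL : 0 < L) {f : ℝ → ℝ → ℝ}
    (hf : ContDiffOn ℝ 1 (fun p : ℝ × ℝ => f p.1 p.2) (ARZrect L))
    {x t : ℝ} (hx : x ∈ Ioo 0 L) (ht : 0 < t) :
    HasFDerivAt (fun p : ℝ × ℝ => f p.1 p.2)
      (fderivWithin ℝ (fun p : ℝ × ℝ => f p.1 p.2) (ARZrect L) (x, t)) (x, t) := by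
  have hmem := interior_mem hx ht
  have hd : DifferentiableAt ℝ (fun p : ℝ × ℝ => f p.1 p.2) (x, t) :=
    ((hf.differentiableOn one_ne_zero) (x, t) (mem_of_mem_nhds hmem)).differentiableAt hmem
  rw [fderivWithin_of_mem_nhds hmem]
  exact hd.hasFDerivAt

lemma hasDerivAt_slice_t {L : ℝ} (hL : 0 < L) {f : ℝ → ℝ → ℝ}
    (hf : ContDiffOn ℝ 1 (fun p : ℝ × ℝ => f p.1 p.2) (ARZrect L))
    {x t : ℝ} (hx : x ∈ Ioo 0 L) (ht : 0 < t) :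
    HasDerivAt (fun s => f x s) (pdt f L x t) t := by
  have h := hasFDerivAt_interior hL hf hx ht
  have hcurve : HasDerivAt (fun s : ℝ => ((x, s) : ℝ × ℝ)) (0, 1) t :=
    HasDerivAt.prodMk (hasDerivAt_const t x) (hasDerivAt_id t)
  exact h.comp_hasDerivAt t hcurve

lemma hasDerivAt_slice_x {L : ℝ} (hL : 0 < L) {f : ℝ → ℝ → ℝ}
    (hf : ContDiffOn ℝ 1 (fun p : ℝ × ℝ => f p.1 p.2) (ARZrect L))
    {x t : ℝ} (hx : x ∈ Ioo 0 L) (ht : 0 < t) :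
    HasDerivAt (fun y => f y t) (pdx f L x t) x := by
  have h := hasFDerivAt_interior hL hf hx ht
  have hcurve : HasDerivAt (fun y : ℝ => ((y, t) : ℝ × ℝ)) (1, 0) x :=
    HasDerivAt.prodMk (hasDerivAt_id x) (hasDerivAt_const x t)
  exact h.comp_hasDerivAt x hcurve

lemma young_div {c V W : ℝ} (hc : 0 < c) : -(V * W) ≤ c * V ^ 2 / 4 + W ^ 2 / c := by
  rw [← sub_nonneg]
  have h : c * V ^ 2 / 4 + W ^ 2 / c - -(V * W) = (c * V / 2 + W) ^ 2 / c := by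
    field_simp; ring
  rw [h]; positivity

-- dissipation estimate
lemma ptwise_R_le {L τ vs lam2 b x : ℝ} (hτ : 0 < τ) (hvs : 0 < vs) (hlam2 : lam2 < 0)
    (hb0 : 0 < b) (hb1 : b ≤ vs * τ ^ 2 * (-lam2) * Real.exp (-(2 * L)) / 4)
    (hx : x ∈ Icc 0 L) (W V : ℝ) :
    -(vs * (Real.exp (-x) * W ^ 2)) + lam2 * b * (Real.exp x * V ^ 2)
      - 2 / τ * (Real.exp (-x) * W ^ 2) - 2 * b / τ * (Real.exp x * (V * W))
      ≤ -min (vs / 2) (-lam2 / 2) *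
        (Real.exp (-x) * W ^ 2 + b * (Real.exp x * V ^ 2)) := by
  set μ := min (vs / 2) (-lam2 / 2) with hμdef
  have hμ1 : μ ≤ vs / 2 := min_le_left _ _
  have hμ2 : μ ≤ -lam2 / 2 := min_le_right _ _
  have hlam2' : (0:ℝ) < -lam2 := by linarith
  set c : ℝ := -lam2 * τ with hcdef
  have hc : 0 < c := mul_pos hlam2' hτ
  have hP : (0:ℝ) ≤ Real.exp (-x) * W ^ 2 := by positivity
  have hQ : (0:ℝ) ≤ Real.exp x * V ^ 2 := by positivity
  have hbQ : (0:ℝ) ≤ b * (Real.exp x * V ^ 2) := by positivity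
  -- Young's inequality for the cross term
  have hcross : -(2 * b / τ * (Real.exp x * (V * W)))
      ≤ -lam2 / 2 * (b * (Real.exp x * V ^ 2))
        + 2 * b / (-lam2 * τ ^ 2) * (Real.exp x * W ^ 2) := by
    have h2 := young_div (V := V) (W := W) hc
    have hpos : (0:ℝ) ≤ 2 * b * Real.exp x / τ := by positivity
    have h3 := mul_le_mul_of_nonneg_left h2 hpos
    calc -(2 * b / τ * (Real.exp x * (V * W)))
        = 2 * b * Real.exp x / τ * (-(V * W)) := by ring
      _ ≤ 2 * b * Real.exp x / τ * (c * V ^ 2 / 4 + W ^ 2 / c) := h3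
      _ = -lam2 / 2 * (b * (Real.exp x * V ^ 2))
          + 2 * b / (-lam2 * τ ^ 2) * (Real.exp x * W ^ 2) := by
          have hτ' : τ ≠ 0 := hτ.ne'
          have hl : lam2 ≠ 0 := hlam2.ne
          rw [hcdef]; field_simp; ring
  -- trade exp x for exp (-x) on the W² term
  have hswap : Real.exp x * W ^ 2 ≤ Real.exp (2 * L) * (Real.exp (-x) * W ^ 2) := by
    have h1 : Real.exp x ≤ Real.exp (2 * L) * Real.exp (-x) := by
      rw [← Real.exp_add]
      exact Real.exp_le_exp.2 (by linarith [hx.1, hx.2])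
    nlinarith [sq_nonneg W, h1]
  have hbound : 2 * b / (-lam2 * τ ^ 2) * (Real.exp x * W ^ 2)
      ≤ vs / 2 * (Real.exp (-x) * W ^ 2) := by
    have hbe : b * Real.exp (2 * L) ≤ vs * τ ^ 2 * (-lam2) / 4 := by
      have h5 := mul_le_mul_of_nonneg_right hb1 (Real.exp_pos (2 * L)).le
      have he : Real.exp (-(2 * L)) * Real.exp (2 * L) = 1 := by
        rw [← Real.exp_add]; simp
      calc b * Real.exp (2 * L)
          ≤ vs * τ ^ 2 * (-lam2) * Real.exp (-(2 * L)) / 4 * Real.exp (2 * L) := h5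
        _ = vs * τ ^ 2 * (-lam2) / 4 * (Real.exp (-(2 * L)) * Real.exp (2 * L)) := by ring
        _ = vs * τ ^ 2 * (-lam2) / 4 := by rw [he]; ring
    have hcoef : 2 * b / (-lam2 * τ ^ 2) * Real.exp (2 * L) ≤ vs / 2 := by
      rw [div_mul_eq_mul_div, div_le_iff₀ (by positivity : (0:ℝ) < -lam2 * τ ^ 2)]
      nlinarith [hbe]
    calc 2 * b / (-lam2 * τ ^ 2) * (Real.exp x * W ^ 2)
        ≤ 2 * b / (-lam2 * τ ^ 2) * (Real.exp (2 * L) * (Real.exp (-x) * W ^ 2)) := by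
          apply mul_le_mul_of_nonneg_left hswap; positivity
      _ = 2 * b / (-lam2 * τ ^ 2) * Real.exp (2 * L) * (Real.exp (-x) * W ^ 2) := by ring
      _ ≤ vs / 2 * (Real.exp (-x) * W ^ 2) := mul_le_mul_of_nonneg_right hcoef hP
  have hμP := mul_le_mul_of_nonneg_right hμ1 hP
  have hμQ := mul_le_mul_of_nonneg_right hμ2 hbQ
  have hτP : (0:ℝ) ≤ 2 / τ * (Real.exp (-x) * W ^ 2) := by positivity
  nlinarith [hcross, hbound, hμP, hμQ, hτP]

-- boundary sign at x = L
lemma boundary_GL {L vs lam2 b W V : ℝ} (hvs : 0 < vs) (hlam2 : lam2 < 0) (hb0 : 0 < b)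
    (hb1 : b ≤ Real.exp (-(2 * L)) * (-lam2) / vs) (hvw : vs * W = lam2 * V) :
    0 ≤ vs * (Real.exp (-L) * W ^ 2) + lam2 * b * (Real.exp L * V ^ 2) := by
  have hW2 : (vs * W) ^ 2 = (lam2 * V) ^ 2 := by rw [hvw]
  have h4 : vs ^ 2 * (Real.exp (-L) * W ^ 2) = lam2 ^ 2 * (Real.exp (-L) * V ^ 2) := by
    nlinarith [hW2, Real.exp_pos (-L)]
  have h1 : b * vs ≤ Real.exp (-(2 * L)) * (-lam2) := by
    rw [le_div_iff₀ hvs] at hb1; exact hb1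
  have h2 : b * vs * Real.exp L ≤ -lam2 * Real.exp (-L) := by
    calc b * vs * Real.exp L ≤ Real.exp (-(2 * L)) * (-lam2) * Real.exp L :=
          mul_le_mul_of_nonneg_right h1 (Real.exp_pos L).le
      _ = -lam2 * (Real.exp (-(2 * L)) * Real.exp L) := by ring
      _ = -lam2 * Real.exp (-L) := by rw [← Real.exp_add]; ring_nf
  have h3 : -lam2 * (b * vs * Real.exp L) * V ^ 2 ≤ -lam2 * (-lam2 * Real.exp (-L)) * V ^ 2 := by
    apply mul_le_mul_of_nonneg_right _ (sq_nonneg V)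
    exact mul_le_mul_of_nonneg_left h2 (by linarith)
  have main : 0 ≤ vs * (vs * (Real.exp (-L) * W ^ 2) + lam2 * b * (Real.exp L * V ^ 2)) := by
    nlinarith [h3, h4]
  exact le_of_mul_le_mul_left (by linarith [main] : vs * 0 ≤ vs * (vs * (Real.exp (-L) * W ^ 2) + lam2 * b * (Real.exp L * V ^ 2))) hvs

lemma ptwise_lower {L b V' x : ℝ} (hb0 : 0 < b) (hV' : V' ≠ 0) (hx : x ∈ Icc 0 L)
    (rv vv : ℝ) :
    rv ^ 2 + vv ^ 2 ≤ (2 / V' ^ 2 + 1) / min (Real.exp (-L)) b *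
      (Real.exp (-x) * (vv - V' * rv) ^ 2 + b * (Real.exp x * vv ^ 2)) := by
  have hV2 : (0:ℝ) < V' ^ 2 := by positivity
  have hm0 : (0:ℝ) < min (Real.exp (-L)) b := lt_min (Real.exp_pos _) hb0
  have key : rv ^ 2 + vv ^ 2 ≤ (2 / V' ^ 2 + 1) * ((vv - V' * rv) ^ 2 + vv ^ 2) := by
    rw [div_add' _ _ _ hV2.ne', div_mul_eq_mul_div, le_div_iff₀ hV2]
    nlinarith [sq_nonneg (vv + (vv - V' * rv)),
      mul_nonneg (sq_nonneg V') (sq_nonneg (vv - V' * rv))]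
  have hm1 : min (Real.exp (-L)) b ≤ Real.exp (-x) := by
    refine le_trans (min_le_left _ _) (Real.exp_le_exp.2 (by linarith [hx.2]))
  have hm2 : min (Real.exp (-L)) b ≤ b * Real.exp x := by
    refine le_trans (min_le_right _ _) ?_
    nlinarith [Real.one_le_exp hx.1, hb0]
  have hsum : min (Real.exp (-L)) b * ((vv - V' * rv) ^ 2 + vv ^ 2)
      ≤ Real.exp (-x) * (vv - V' * rv) ^ 2 + b * (Real.exp x * vv ^ 2) := by
    nlinarith [mul_le_mul_of_nonneg_right hm1 (sq_nonneg (vv - V' * rv)),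
      mul_le_mul_of_nonneg_right hm2 (sq_nonneg vv)]
  have hc : (0:ℝ) ≤ (2 / V' ^ 2 + 1) / min (Real.exp (-L)) b := by positivity
  calc rv ^ 2 + vv ^ 2 ≤ (2 / V' ^ 2 + 1) * ((vv - V' * rv) ^ 2 + vv ^ 2) := key
    _ = (2 / V' ^ 2 + 1) / min (Real.exp (-L)) b *
        (min (Real.exp (-L)) b * ((vv - V' * rv) ^ 2 + vv ^ 2)) := by
        field_simp
    _ ≤ _ := mul_le_mul_of_nonneg_left hsum hc

lemma ptwise_upper {L b V' x : ℝ} (hb0 : 0 < b) (hx : x ∈ Icc 0 L) (rv vv : ℝ) :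
    Real.exp (-x) * (vv - V' * rv) ^ 2 + b * (Real.exp x * vv ^ 2)
      ≤ max 1 (b * Real.exp L) * (2 * V' ^ 2 + 3) * (rv ^ 2 + vv ^ 2) := by
  have hM : (0:ℝ) < max 1 (b * Real.exp L) := lt_max_of_lt_left one_pos
  have h1 : Real.exp (-x) ≤ max 1 (b * Real.exp L) :=
    le_trans (Real.exp_le_one_iff.2 (by linarith [hx.1])) (le_max_left _ _)
  have h2 : b * Real.exp x ≤ max 1 (b * Real.exp L) := by
    refine le_trans ?_ (le_max_right _ _)
    exact mul_le_mul_of_nonneg_left (Real.exp_le_exp.2 hx.2) hb0.le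
  have hw : (vv - V' * rv) ^ 2 + vv ^ 2 ≤ (2 * V' ^ 2 + 3) * (rv ^ 2 + vv ^ 2) := by
    nlinarith [sq_nonneg (vv + V' * rv), mul_nonneg (sq_nonneg V') (sq_nonneg rv), sq_nonneg rv, sq_nonneg vv]
  calc Real.exp (-x) * (vv - V' * rv) ^ 2 + b * (Real.exp x * vv ^ 2)
      ≤ max 1 (b * Real.exp L) * ((vv - V' * rv) ^ 2 + vv ^ 2) := by
        nlinarith [mul_le_mul_of_nonneg_right h1 (sq_nonneg (vv - V' * rv)),
          mul_le_mul_of_nonneg_right h2 (sq_nonneg vv)]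
    _ ≤ max 1 (b * Real.exp L) * ((2 * V' ^ 2 + 3) * (rv ^ 2 + vv ^ 2)) :=
        mul_le_mul_of_nonneg_left hw hM.le
    _ = _ := by ring

set_option maxHeartbeats 1000000 in
/-- Exponential L² stability of the linearized ARZ model under
collocated P boundary control: there exist `C ≥ 1` and `μ > 0`, depending only
on the model data, such that every classical solution with boundary conditions
`q̃(0,t) = g_P ṽ(0,t)` (with `g_P = ρ* + v*/V'(ρ*)`) and `q̃(L,t) = 0` satisfies
`∫₀^L (ρ̃² + ṽ²)(x,t) dx ≤ C e^{−μt} ∫₀^L (ρ̃² + ṽ²)(x,0) dx` for all `t ≥ 0`. -/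
theorem linearized_ARZ_P_control_exp_stability
    (L τ ρs : ℝ) (hL : 0 < L) (hτ : 0 < τ) (hρs : 0 < ρs)
    (V : ℝ → ℝ) (V' : ℝ) (hV : HasDerivAt V V' ρs) (hV' : V' < 0)
    (vs : ℝ) (hvs : vs = V ρs) (hvs_pos : 0 < vs)
    (lam1 lam2 : ℝ) (hlam1 : lam1 = vs) (hlam2 : lam2 = vs + ρs * V')
    (hcong : lam2 < 0) :
    ∃ C μ : ℝ, 1 ≤ C ∧ 0 < μ ∧
      ∀ ρ v : ℝ → ℝ → ℝ,
        ContDiffOn ℝ 1 (fun p : ℝ × ℝ => ρ p.1 p.2) (Icc 0 L ×ˢ Ici 0) →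
        ContDiffOn ℝ 1 (fun p : ℝ × ℝ => v p.1 p.2) (Icc 0 L ×ˢ Ici 0) →
        (∀ x ∈ Icc (0:ℝ) L, ∀ t ∈ Ici (0:ℝ),
          deriv (fun s => ρ x s) t + vs * deriv (fun y => ρ y t) x
            + ρs * deriv (fun y => v y t) x = 0) →
        (∀ x ∈ Icc (0:ℝ) L, ∀ t ∈ Ici (0:ℝ),
          deriv (fun s => v x s - V' * ρ x s) t
            + vs * deriv (fun y => v y t - V' * ρ y t) x
            = -(v x t - V' * ρ x t) / τ) →
        (∀ t ≥ (0:ℝ), ρs * v 0 t + vs * ρ 0 t = (ρs + vs / V') * v 0 t) →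
        (∀ t ≥ (0:ℝ), ρs * v L t + vs * ρ L t = 0) →
        ∀ t ≥ (0:ℝ),
          (∫ x in (0:ℝ)..L, ((ρ x t) ^ 2 + (v x t) ^ 2))
            ≤ C * Real.exp (-μ * t) *
              ∫ x in (0:ℝ)..L, ((ρ x 0) ^ 2 + (v x 0) ^ 2) := by
  have hV'ne : V' ≠ 0 := hV'.ne
  have hlam2' : (0:ℝ) < -lam2 := by linarith
  set b : ℝ := min (Real.exp (-(2 * L)) * (-lam2) / vs)
      (vs * τ ^ 2 * (-lam2) * Real.exp (-(2 * L)) / 4) with hbdef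
  have hb0 : 0 < b := lt_min (by positivity) (by positivity)
  set μ : ℝ := min (vs / 2) (-lam2 / 2) with hμdef
  have hμ0 : 0 < μ := lt_min (by positivity) (by positivity)
  set K1 : ℝ := (2 / V' ^ 2 + 1) / min (Real.exp (-L)) b with hK1def
  set K2 : ℝ := max 1 (b * Real.exp L) * (2 * V' ^ 2 + 3) with hK2def
  have hm0 : (0:ℝ) < min (Real.exp (-L)) b := lt_min (Real.exp_pos _) hb0
  have hK1pos : 0 < K1 := by rw [hK1def]; positivity
  have hK2pos : 0 < K2 := by
    rw [hK2def]
    exact mul_pos (lt_max_of_lt_left one_pos) (by positivity)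
  refine ⟨max 1 (K1 * K2), μ, le_max_left _ _, hμ0, ?_⟩
  intro ρ v hρ hv pde1 pde2 bc0 bcL
  -- auxiliary local functions
  set w : ℝ → ℝ → ℝ := fun x t => v x t - V' * ρ x t with hwdef
  set F : ℝ → ℝ → ℝ := fun x t =>
    Real.exp (-x) * w x t ^ 2 + b * (Real.exp x * v x t ^ 2) with hFdef
  set Ft : ℝ → ℝ → ℝ := fun x t =>
    Real.exp (-x) * (2 * w x t * (pdt v L x t - V' * pdt ρ L x t))
      + b * (Real.exp x * (2 * v x t * pdt v L x t)) with hFtdef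
  set G : ℝ → ℝ → ℝ := fun x t =>
    vs * (Real.exp (-x) * w x t ^ 2) + lam2 * b * (Real.exp x * v x t ^ 2) with hGdef
  set Gx : ℝ → ℝ → ℝ := fun x t =>
    vs * (-Real.exp (-x) * w x t ^ 2
        + Real.exp (-x) * (2 * w x t * (pdx v L x t - V' * pdx ρ L x t)))
      + lam2 * b * (Real.exp x * v x t ^ 2 + Real.exp x * (2 * v x t * pdx v L x t)) with hGxdef
  set R : ℝ → ℝ → ℝ := fun x t =>
    -(vs * (Real.exp (-x) * w x t ^ 2)) + lam2 * b * (Real.exp x * v x t ^ 2)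
      - 2 / τ * (Real.exp (-x) * w x t ^ 2)
      - 2 * b / τ * (Real.exp x * (v x t * w x t)) with hRdef
  set E : ℝ → ℝ := fun t => ∫ x in (0:ℝ)..L, F x t with hEdef
  -- basic continuity facts
  have hρC : ContinuousOn (fun p : ℝ × ℝ => ρ p.1 p.2) (ARZrect L) := hρ.continuousOn
  have hvC : ContinuousOn (fun p : ℝ × ℝ => v p.1 p.2) (ARZrect L) := hv.continuousOn
  have hwC : ContinuousOn (fun p : ℝ × ℝ => w p.1 p.2) (ARZrect L) := by
    simp only [hwdef]
    exact hvC.sub (continuousOn_const.mul hρC)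
  have hpdxρ := continuousOn_pdx hL hρ
  have hpdxv := continuousOn_pdx hL hv
  have hpdtρ := continuousOn_pdt hL hρ
  have hpdtv := continuousOn_pdt hL hv
  have he1 : Continuous (fun p : ℝ × ℝ => Real.exp (-p.1)) :=
    Real.continuous_exp.comp continuous_fst.neg
  have he2 : Continuous (fun p : ℝ × ℝ => Real.exp p.1) :=
    Real.continuous_exp.comp continuous_fst
  have hFC : ContinuousOn (fun p : ℝ × ℝ => F p.1 p.2) (ARZrect L) := by
    simp only [hFdef]
    exact (he1.continuousOn.mul (hwC.pow 2)).add
      (continuousOn_const.mul (he2.continuousOn.mul (hvC.pow 2)))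
  have hFtC : ContinuousOn (fun p : ℝ × ℝ => Ft p.1 p.2) (ARZrect L) := by
    simp only [hFtdef]
    exact (he1.continuousOn.mul ((continuousOn_const.mul hwC).mul
        (hpdtv.sub (continuousOn_const.mul hpdtρ)))).add
      (continuousOn_const.mul (he2.continuousOn.mul
        ((continuousOn_const.mul hvC).mul hpdtv)))
  have hGC : ContinuousOn (fun p : ℝ × ℝ => G p.1 p.2) (ARZrect L) := by
    simp only [hGdef]
    exact (continuousOn_const.mul (he1.continuousOn.mul (hwC.pow 2))).add
      (continuousOn_const.mul (he2.continuousOn.mul (hvC.pow 2)))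
  have hGxC : ContinuousOn (fun p : ℝ × ℝ => Gx p.1 p.2) (ARZrect L) := by
    simp only [hGxdef]
    exact (continuousOn_const.mul ((he1.neg.continuousOn.mul (hwC.pow 2)).add
        (he1.continuousOn.mul ((continuousOn_const.mul hwC).mul
          (hpdxv.sub (continuousOn_const.mul hpdxρ)))))).add
      (continuousOn_const.mul ((he2.continuousOn.mul (hvC.pow 2)).add
        (he2.continuousOn.mul ((continuousOn_const.mul hvC).mul hpdxv))))
  have hRC : ContinuousOn (fun p : ℝ × ℝ => R p.1 p.2) (ARZrect L) := by
    simp only [hRdef]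
    exact (((continuousOn_const.mul (he1.continuousOn.mul (hwC.pow 2))).neg.add
        (continuousOn_const.mul (he2.continuousOn.mul (hvC.pow 2)))).sub
      (continuousOn_const.mul (he1.continuousOn.mul (hwC.pow 2)))).sub
      (continuousOn_const.mul (he2.continuousOn.mul (hvC.mul hwC)))
  -- slices
  have hslice : ∀ (g : ℝ → ℝ → ℝ), ContinuousOn (fun p : ℝ × ℝ => g p.1 p.2) (ARZrect L) →
      ∀ {s : ℝ}, 0 ≤ s → ContinuousOn (fun x => g x s) (Icc 0 L) := by
    intro g hg s hs
    have : (fun x => g x s) = (fun p : ℝ × ℝ => g p.1 p.2) ∘ (fun x => (x, s)) := rfl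
    rw [this]
    exact hg.comp (Continuous.continuousOn (continuous_id.prodMk continuous_const)) (fun x hx => ⟨hx, hs⟩)
  have htslice : ∀ (g : ℝ → ℝ → ℝ), ContinuousOn (fun p : ℝ × ℝ => g p.1 p.2) (ARZrect L) →
      ∀ {x : ℝ}, x ∈ Icc 0 L → ContinuousOn (fun s => g x s) (Ici 0) := by
    intro g hg x hx
    have : (fun s => g x s) = (fun p : ℝ × ℝ => g p.1 p.2) ∘ (fun s => (x, s)) := rfl
    rw [this]
    exact hg.comp (Continuous.continuousOn (continuous_const.prodMk continuous_id)) (fun s hs => ⟨hx, hs⟩)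
  have hInt : ∀ (g : ℝ → ℝ → ℝ), ContinuousOn (fun p : ℝ × ℝ => g p.1 p.2) (ARZrect L) →
      ∀ {s : ℝ}, 0 ≤ s → IntervalIntegrable (fun x => g x s) MeasureTheory.volume 0 L := by
    intro g hg s hs
    have h := hslice g hg hs
    rw [show Icc (0:ℝ) L = uIcc 0 L from (uIcc_of_le hL.le).symm] at h
    exact h.intervalIntegrable
  -- interior slice derivatives
  have hρt : ∀ {x t : ℝ}, x ∈ Ioo 0 L → 0 < t →
      HasDerivAt (fun s => ρ x s) (pdt ρ L x t) t := fun hx ht => hasDerivAt_slice_t hL hρ hx ht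
  have hvt : ∀ {x t : ℝ}, x ∈ Ioo 0 L → 0 < t →
      HasDerivAt (fun s => v x s) (pdt v L x t) t := fun hx ht => hasDerivAt_slice_t hL hv hx ht
  have hρx : ∀ {x t : ℝ}, x ∈ Ioo 0 L → 0 < t →
      HasDerivAt (fun y => ρ y t) (pdx ρ L x t) x := fun hx ht => hasDerivAt_slice_x hL hρ hx ht
  have hvx : ∀ {x t : ℝ}, x ∈ Ioo 0 L → 0 < t →
      HasDerivAt (fun y => v y t) (pdx v L x t) x := fun hx ht => hasDerivAt_slice_x hL hv hx ht
  have hwt : ∀ {x t : ℝ}, x ∈ Ioo 0 L → 0 < t →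
      HasDerivAt (fun s => v x s - V' * ρ x s) (pdt v L x t - V' * pdt ρ L x t) t :=
    fun hx ht => (hvt hx ht).sub ((hρt hx ht).const_mul V')
  have hwx : ∀ {x t : ℝ}, x ∈ Ioo 0 L → 0 < t →
      HasDerivAt (fun y => v y t - V' * ρ y t) (pdx v L x t - V' * pdx ρ L x t) x :=
    fun hx ht => (hvx hx ht).sub ((hρx hx ht).const_mul V')
  -- interior PDEs in terms of partial derivatives
  have pde1' : ∀ {x t : ℝ}, x ∈ Ioo 0 L → 0 < t →
      pdt ρ L x t + vs * pdx ρ L x t + ρs * pdx v L x t = 0 := by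
    intro x t hx ht
    have h := pde1 x (Ioo_subset_Icc_self hx) t ht.le
    rwa [(hρt hx ht).deriv, (hρx hx ht).deriv, (hvx hx ht).deriv] at h
  have pdeA : ∀ {x t : ℝ}, x ∈ Ioo 0 L → 0 < t →
      (pdt v L x t - V' * pdt ρ L x t) + vs * (pdx v L x t - V' * pdx ρ L x t)
        = -(w x t) / τ := by
    intro x t hx ht
    have h := pde2 x (Ioo_subset_Icc_self hx) t ht.le
    rw [(hwt hx ht).deriv, (hwx hx ht).deriv] at h
    simpa only [hwdef] using h
  have pdeB : ∀ {x t : ℝ}, x ∈ Ioo 0 L → 0 < t →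
      pdt v L x t + lam2 * pdx v L x t = -(w x t) / τ := by
    intro x t hx ht
    have hA := pdeA hx ht
    have h1 := pde1' hx ht
    rw [hlam2]
    linear_combination hA + V' * h1
  -- derivative of F in time
  have hFt' : ∀ {x t : ℝ}, x ∈ Ioo 0 L → 0 < t →
      HasDerivAt (fun s => F x s) (Ft x t) t := by
    intro x t hx ht
    have h := (((hwt hx ht).pow 2).const_mul (Real.exp (-x))).add
      ((((hvt hx ht).pow 2).const_mul (Real.exp x)).const_mul b)
    simp only [hFdef, hFtdef, hwdef]
    exact h.congr_deriv (by ring)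
  -- derivative of G in space
  have hGx' : ∀ {x t : ℝ}, x ∈ Ioo 0 L → 0 < t →
      HasDerivAt (fun y => G y t) (Gx x t) x := by
    intro x t hx ht
    have hexpneg : HasDerivAt (fun y : ℝ => Real.exp (-y)) (-Real.exp (-x)) x := by
      simpa [Function.comp_def] using (Real.hasDerivAt_exp (-x)).comp x ((hasDerivAt_id x).neg)
    have hexp : HasDerivAt (fun y : ℝ => Real.exp y) (Real.exp x) x := Real.hasDerivAt_exp x
    have h := ((hexpneg.mul ((hwx hx ht).pow 2)).const_mul vs).add
      ((hexp.mul ((hvx hx ht).pow 2)).const_mul (lam2 * b))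
    simp only [hGdef, hGxdef, hwdef]
    exact h.congr_deriv (by simp only [Pi.pow_apply]; ring)
  have hIoc : Set.uIoc (0:ℝ) L = Ioc 0 L := uIoc_of_le hL.le
  have haeL : ∀ᵐ (x : ℝ) ∂MeasureTheory.volume, x ≠ L := by
    have : MeasureTheory.volume ({L} : Set ℝ) = 0 := MeasureTheory.measure_singleton L
    filter_upwards [MeasureTheory.compl_mem_ae_iff.mpr this] with x hx
    simpa using hx
  -- differentiation under the integral sign
  have hE' : ∀ t0 : ℝ, 0 < t0 →
      HasDerivAt E (∫ x in (0:ℝ)..L, Ft x t0) t0 := by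
    intro t0 ht0
    have hKsub : Icc 0 L ×ˢ Icc (t0 / 2) (3 * t0 / 2) ⊆ ARZrect L := by
      intro p hp
      exact ⟨hp.1, le_trans (by linarith) hp.2.1⟩
    obtain ⟨M, hM⟩ := (isCompact_Icc.prod isCompact_Icc).exists_bound_of_continuousOn
      (hFtC.mono hKsub)
    have hmain := intervalIntegral.hasDerivAt_integral_of_dominated_loc_of_deriv_le
      (F := fun s x => F x s) (F' := fun s x => Ft x s) (bound := fun _ => M)
      (a := 0) (b := L) (μ := MeasureTheory.volume) (x₀ := t0)
      (Metric.ball_mem_nhds t0 (half_pos ht0)) ?_ ?_ ?_ ?_ ?_ ?_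
    · exact hmain.2
    · filter_upwards [Ioi_mem_nhds ht0] with s hs
      rw [hIoc]
      exact ((hslice F hFC (le_of_lt hs)).mono Ioc_subset_Icc_self).aestronglyMeasurable
        measurableSet_Ioc
    · exact hInt F hFC ht0.le
    · rw [hIoc]
      exact ((hslice Ft hFtC ht0.le).mono Ioc_subset_Icc_self).aestronglyMeasurable
        measurableSet_Ioc
    · apply MeasureTheory.ae_of_all
      intro x hx s hs
      rw [hIoc] at hx
      rw [Metric.mem_ball, Real.dist_eq, abs_lt] at hs
      exact hM (x, s) ⟨Ioc_subset_Icc_self hx, ⟨by linarith [hs.1], by linarith [hs.2]⟩⟩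
    · exact intervalIntegrable_const
    · filter_upwards [haeL] with x hxL hx s hs
      rw [hIoc] at hx
      rw [Metric.mem_ball, Real.dist_eq, abs_lt] at hs
      exact hFt' ⟨hx.1, lt_of_le_of_ne hx.2 hxL⟩ (by linarith [hs.1])
  -- boundary conditions in terms of w
  have hw0 : ∀ t : ℝ, 0 ≤ t → w 0 t = 0 := by
    intro t htt
    have h := bc0 t htt
    have h3 : ρ 0 t = v 0 t / V' := by
      apply mul_left_cancel₀ hvs_pos.ne'
      linear_combination h
    simp only [hwdef]
    rw [h3]
    field_simp
    ring
  have hvL : ∀ t : ℝ, 0 ≤ t → vs * w L t = lam2 * v L t := by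
    intro t htt
    have h := bcL t htt
    simp only [hwdef]
    rw [hlam2]
    linear_combination (-V') * h
  -- the key differential inequality
  have hE'le : ∀ t0 : ℝ, 0 < t0 → (∫ x in (0:ℝ)..L, Ft x t0) ≤ -μ * E t0 := by
    intro t0 ht0
    have hGxInt := hInt Gx hGxC ht0.le
    have hRInt := hInt R hRC ht0.le
    have hFInt := hInt F hFC ht0.le
    have hcongr : (∫ x in (0:ℝ)..L, Ft x t0) = ∫ x in (0:ℝ)..L, (-Gx x t0 + R x t0) := by
      apply intervalIntegral.integral_congr_ae
      filter_upwards [haeL] with x hxL hx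
      rw [hIoc] at hx
      have hxI : x ∈ Ioo 0 L := ⟨hx.1, lt_of_le_of_ne hx.2 hxL⟩
      have hA := pdeA hxI ht0
      have hB := pdeB hxI ht0
      simp only [hFtdef, hGxdef, hRdef]
      linear_combination (2 * Real.exp (-x) * w x t0) * hA + (2 * b * Real.exp x * v x t0) * hB
    have hFTC : (∫ x in (0:ℝ)..L, Gx x t0) = G L t0 - G 0 t0 := by
      apply intervalIntegral.integral_eq_sub_of_hasDeriv_right_of_le hL.le
        (hslice G hGC ht0.le) ?_ hGxInt
      intro x hx
      exact (hGx' hx ht0).hasDerivWithinAt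
    have hG0 : G 0 t0 ≤ 0 := by
      have h0 := hw0 t0 ht0.le
      simp only [hGdef, h0, neg_zero, Real.exp_zero]
      nlinarith [mul_nonneg hb0.le (sq_nonneg (v 0 t0)), hlam2']
    have hGL : 0 ≤ G L t0 := by
      simp only [hGdef]
      exact boundary_GL hvs_pos hcong hb0 (by rw [hbdef]; exact min_le_left _ _)
        (hvL t0 ht0.le)
    have hRmono : (∫ x in (0:ℝ)..L, R x t0) ≤ ∫ x in (0:ℝ)..L, -μ * F x t0 := by
      apply intervalIntegral.integral_mono_on hL.le hRInt (hFInt.const_mul (-μ))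
      intro x hx
      have hkey := ptwise_R_le (L := L) hτ hvs_pos hcong hb0
        (by rw [hbdef]; exact min_le_right _ _) hx (w x t0) (v x t0)
      simp only [hRdef, hFdef, hμdef]
      exact hkey
    have hconst : (∫ x in (0:ℝ)..L, -μ * F x t0) = -μ * E t0 := by
      simp only [hEdef]
      exact intervalIntegral.integral_const_mul _ _
    calc (∫ x in (0:ℝ)..L, Ft x t0) = ∫ x in (0:ℝ)..L, (-Gx x t0 + R x t0) := hcongr
      _ = (∫ x in (0:ℝ)..L, -Gx x t0) + ∫ x in (0:ℝ)..L, R x t0 :=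
          intervalIntegral.integral_add hGxInt.neg hRInt
      _ = -(G L t0 - G 0 t0) + ∫ x in (0:ℝ)..L, R x t0 := by
          rw [intervalIntegral.integral_neg, hFTC]
      _ ≤ -(G L t0 - G 0 t0) + -μ * E t0 := by
          have := hRmono.trans_eq hconst
          linarith
      _ ≤ -μ * E t0 := by linarith
  -- continuity of E on [0, ∞)
  have hEcont : ContinuousOn E (Ici 0) := by
    intro t0 ht0
    have hKsub : Icc 0 L ×ˢ Icc 0 (t0 + 1) ⊆ ARZrect L := fun p hp => ⟨hp.1, hp.2.1⟩
    obtain ⟨M, hM⟩ := (isCompact_Icc.prod isCompact_Icc).exists_bound_of_continuousOn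
      (hFC.mono hKsub)
    simp only [hEdef]
    apply intervalIntegral.continuousWithinAt_of_dominated_interval
      (bound := fun _ => M) ?_ ?_ intervalIntegrable_const ?_
    · filter_upwards [self_mem_nhdsWithin] with s hs
      rw [hIoc]
      exact ((hslice F hFC hs).mono Ioc_subset_Icc_self).aestronglyMeasurable
        measurableSet_Ioc
    · filter_upwards [mem_nhdsWithin_of_mem_nhds (Iic_mem_nhds (lt_add_one t0)),
        self_mem_nhdsWithin] with s hs1 hs2
      apply MeasureTheory.ae_of_all
      intro x hx
      rw [hIoc] at hx
      exact hM (x, s) ⟨Ioc_subset_Icc_self hx, ⟨hs2, hs1⟩⟩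
    · apply MeasureTheory.ae_of_all
      intro x hx
      rw [hIoc] at hx
      exact htslice F hFC (Ioc_subset_Icc_self hx) t0 ht0
  -- Gronwall
  have hEdecay : ∀ t1 : ℝ, 0 ≤ t1 → E t1 ≤ Real.exp (-μ * t1) * E 0 := by
    intro t1 ht1
    rcases eq_or_lt_of_le ht1 with heq | hpos
    · rw [← heq]; simp
    · have hφcont : ContinuousOn (fun s => Real.exp (μ * s) * E s) (Icc 0 t1) :=
        ((Real.continuous_exp.comp (continuous_const.mul continuous_id)).continuousOn).mul
          (hEcont.mono (fun s hs => hs.1))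
      have hφderiv : ∀ s ∈ interior (Icc (0:ℝ) t1),
          HasDerivAt (fun r => Real.exp (μ * r) * E r)
            (μ * Real.exp (μ * s) * E s + Real.exp (μ * s) * (∫ x in (0:ℝ)..L, Ft x s)) s := by
        rw [interior_Icc]
        intro s hs
        have h1 : HasDerivAt (fun r => Real.exp (μ * r)) (Real.exp (μ * s) * (μ * 1)) s :=
          ((hasDerivAt_id s).const_mul μ).exp
        have h2 := h1.mul (hE' s hs.1)
        exact h2.congr_deriv (by ring)
      have hmono : AntitoneOn (fun s => Real.exp (μ * s) * E s) (Icc 0 t1) := by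
        apply antitoneOn_of_deriv_nonpos (convex_Icc 0 t1) hφcont
        · intro s hs
          exact (hφderiv s hs).differentiableAt.differentiableWithinAt
        · intro s hs
          rw [(hφderiv s hs).deriv]
          rw [interior_Icc] at hs
          have hle := hE'le s hs.1
          have h2 := mul_le_mul_of_nonneg_left hle (Real.exp_pos (μ * s)).le
          nlinarith [h2]
      have hkey := hmono (left_mem_Icc.2 hpos.le) (right_mem_Icc.2 hpos.le) hpos.le
      simp only [mul_zero, Real.exp_zero, one_mul] at hkey
      rw [show -μ * t1 = -(μ * t1) by ring, Real.exp_neg]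
      calc E t1 = (Real.exp (μ * t1))⁻¹ * (Real.exp (μ * t1) * E t1) := by
            field_simp
        _ ≤ (Real.exp (μ * t1))⁻¹ * E 0 := mul_le_mul_of_nonneg_left hkey (by positivity)
  -- final assembly
  intro t ht
  have hsqC : ContinuousOn (fun p : ℝ × ℝ => ρ p.1 p.2 ^ 2 + v p.1 p.2 ^ 2) (ARZrect L) :=
    (hρC.pow 2).add (hvC.pow 2)
  have hIvInt : ∀ {s : ℝ}, 0 ≤ s →
      IntervalIntegrable (fun x => ρ x s ^ 2 + v x s ^ 2) MeasureTheory.volume 0 L :=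
    fun hs => hInt (fun x t => ρ x t ^ 2 + v x t ^ 2) hsqC hs
  have hI0 : 0 ≤ ∫ x in (0:ℝ)..L, (ρ x 0 ^ 2 + v x 0 ^ 2) :=
    intervalIntegral.integral_nonneg hL.le (fun x hx => by positivity)
  have h1 : (∫ x in (0:ℝ)..L, (ρ x t ^ 2 + v x t ^ 2)) ≤ K1 * E t := by
    calc (∫ x in (0:ℝ)..L, (ρ x t ^ 2 + v x t ^ 2))
        ≤ ∫ x in (0:ℝ)..L, K1 * F x t := by
          apply intervalIntegral.integral_mono_on hL.le (hIvInt ht)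
            ((hInt F hFC ht).const_mul K1)
          intro x hx
          have hkey := ptwise_lower (L := L) hb0 hV'ne hx (ρ x t) (v x t)
          simp only [hFdef, hwdef, hK1def]
          exact hkey
      _ = K1 * E t := by
          simp only [hEdef]
          exact intervalIntegral.integral_const_mul _ _
  have h2 : E 0 ≤ K2 * ∫ x in (0:ℝ)..L, (ρ x 0 ^ 2 + v x 0 ^ 2) := by
    calc E 0 ≤ ∫ x in (0:ℝ)..L, K2 * (ρ x 0 ^ 2 + v x 0 ^ 2) := by
          simp only [hEdef]
          apply intervalIntegral.integral_mono_on hL.le (hInt F hFC le_rfl)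
            ((hIvInt le_rfl).const_mul K2)
          intro x hx
          have hkey := ptwise_upper (L := L) (V' := V') hb0 hx (ρ x 0) (v x 0)
          simp only [hFdef, hwdef, hK2def]
          exact hkey
      _ = K2 * ∫ x in (0:ℝ)..L, (ρ x 0 ^ 2 + v x 0 ^ 2) :=
          intervalIntegral.integral_const_mul _ _
  calc (∫ x in (0:ℝ)..L, (ρ x t ^ 2 + v x t ^ 2))
      ≤ K1 * E t := h1
    _ ≤ K1 * (Real.exp (-μ * t) * E 0) :=
        mul_le_mul_of_nonneg_left (hEdecay t ht) hK1pos.le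
    _ ≤ K1 * (Real.exp (-μ * t) * (K2 * ∫ x in (0:ℝ)..L, (ρ x 0 ^ 2 + v x 0 ^ 2))) := by
        apply mul_le_mul_of_nonneg_left _ hK1pos.le
        exact mul_le_mul_of_nonneg_left h2 (Real.exp_pos _).le
    _ = (K1 * K2) * Real.exp (-μ * t) * ∫ x in (0:ℝ)..L, (ρ x 0 ^ 2 + v x 0 ^ 2) := by
        ring
    _ ≤ max 1 (K1 * K2) * Real.exp (-μ * t) * ∫ x in (0:ℝ)..L, (ρ x 0 ^ 2 + v x 0 ^ 2) := by
        apply mul_le_mul_of_nonneg_right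
          (mul_le_mul_of_nonneg_right (le_max_right _ _) (Real.exp_pos _).le) hI0
end

section
/- Let λ < 0, L > 0 and T ≥ 0. Let f : [0,L] × [0,∞) → ℝ be continuous with f(x,t) = 0 whenever t ≥ T, and let u : [0,L] × [0,∞) → ℝ be continuously differentiable and satisfy the forced transport equation ∂ₜu + λ ∂ₓu = f(x,t) on [0,L] × [0,∞), together with the boundary condition u(L,t) = 0 for all t ≥ T. Then u(x,t) = 0 for every x ∈ [0,L] and every t ≥ T + (L − x)/(−λ); in particular u(·,t) ≡ 0 on [0,L] for all t ≥ T + L/(−λ). -/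
/-!
Along the characteristic `s ↦ (x + λ (s - t), s)` through `(x, t)` the transport equation says
`d/ds u = f`, and `f = 0` after time `T`. If `t ≥ T + (L - x)/(-λ)`, tracing this characteristic
back in time reaches the inflow boundary `x = L` at the time `s₀ = t - (L - x)/(-λ) ≥ T`, where
`u` vanishes; in between it runs through the interior of the domain, where `u` is differentiable,
so `u x t = u L s₀ = 0`.
-/

open Set

theorem eq_of_continuousOn_Icc_of_hasDerivAt_zero {g : ℝ → ℝ} {a b : ℝ} (hab : a ≤ b)
    (hg : ContinuousOn g (Icc a b)) (hg' : ∀ s ∈ Ioo a b, HasDerivAt g 0 s) : g a = g b := by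
  rcases hab.eq_or_lt with rfl | hab
  · rfl
  obtain ⟨c, -, hc⟩ := exists_hasDerivAt_eq_slope g (fun _ => 0) hab hg hg'
  have := (div_eq_zero_iff.mp hc.symm).resolve_right (sub_ne_zero.mpr hab.ne')
  exact (sub_eq_zero.mp this).symm

theorem hasDerivAt_comp_line_of_differentiableAt {u : ℝ → ℝ → ℝ} {c x t s : ℝ}
    (hu : DifferentiableAt ℝ (fun p : ℝ × ℝ => u p.1 p.2) (x + c * (s - t), s)) :
    HasDerivAt (fun r => u (x + c * (r - t)) r)
      (deriv (fun r => u (x + c * (s - t)) r) s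
        + c * deriv (fun y => u y s) (x + c * (s - t))) s := by
  set D := fderiv ℝ (fun p : ℝ × ℝ => u p.1 p.2) (x + c * (s - t), s)
  have hD := hu.hasFDerivAt
  have hline : HasDerivAt (fun r : ℝ => (x + c * (r - t), r)) (c, 1) s := by
    refine HasDerivAt.prodMk ?_ (hasDerivAt_id s)
    simpa using (((hasDerivAt_id s).sub_const t).const_mul c).const_add x
  have hx : HasDerivAt (fun y => u y s) (D (1, 0)) (x + c * (s - t)) :=
    hD.comp_hasDerivAt (f := fun y : ℝ => (y, s)) _
      ((hasDerivAt_id _).prodMk (hasDerivAt_const _ _))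
  have ht : HasDerivAt (fun r => u (x + c * (s - t)) r) (D (0, 1)) s :=
    hD.comp_hasDerivAt (f := fun r : ℝ => (x + c * (s - t), r)) _
      ((hasDerivAt_const _ _).prodMk (hasDerivAt_id _))
  have hsplit : D (c, 1) = D (0, 1) + c * D (1, 0) := by
    rw [show ((c, 1) : ℝ × ℝ) = (0, 1) + c • (1, 0) by simp, map_add, map_smul,
      smul_eq_mul]
  rw [ht.deriv, hx.deriv, ← hsplit]
  exact hD.comp_hasDerivAt (f := fun r : ℝ => (x + c * (r - t), r)) s hline

theorem transport_eq_along_characteristic {u : ℝ → ℝ → ℝ} {S : Set (ℝ × ℝ)} {c x t s₀ : ℝ}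
    (hs₀ : s₀ ≤ t) (hu : ContinuousOn (fun p : ℝ × ℝ => u p.1 p.2) S)
    (hmem : ∀ s ∈ Icc s₀ t, (x + c * (s - t), s) ∈ S)
    (hdiff : ∀ s ∈ Ioo s₀ t,
      DifferentiableAt ℝ (fun p : ℝ × ℝ => u p.1 p.2) (x + c * (s - t), s))
    (hpde : ∀ s ∈ Ioo s₀ t,
      deriv (fun r => u (x + c * (s - t)) r) s
        + c * deriv (fun y => u y s) (x + c * (s - t)) = 0) :
    u (x + c * (s₀ - t)) s₀ = u x t := by
  have hcont : ContinuousOn (fun r => u (x + c * (r - t)) r) (Icc s₀ t) :=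
    hu.comp (by fun_prop) hmem
  have h := eq_of_continuousOn_Icc_of_hasDerivAt_zero hs₀ hcont fun s hs => by
    simpa [hpde s hs] using hasDerivAt_comp_line_of_differentiableAt (hdiff s hs)
  simpa using h

theorem interior_Icc_prod_Ici (a b c : ℝ) : interior (Icc a b ×ˢ Ici c) = Ioo a b ×ˢ Ioi c := by
  rw [interior_prod_eq, interior_Icc, interior_Ici]

theorem forced_transport_upstream_finite_time_general
    (lam L T : ℝ) (hlam : lam < 0) (hT : 0 ≤ T)
    (f : ℝ → ℝ → ℝ)
    (hf0 : ∀ x t, T ≤ t → f x t = 0)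
    (u : ℝ → ℝ → ℝ)
    (hC1 : ContDiffOn ℝ 1 (fun p : ℝ × ℝ => u p.1 p.2) (Icc 0 L ×ˢ Ici 0))
    (pde : ∀ x ∈ Icc (0:ℝ) L, ∀ t ∈ Ici (0:ℝ),
      deriv (fun s => u x s) t + lam * deriv (fun y => u y t) x = f x t)
    (bc : ∀ t, T ≤ t → u L t = 0) :
    ∀ x ∈ Icc (0:ℝ) L, ∀ t, T + (L - x) / (-lam) ≤ t → u x t = 0 := by
  intro x ⟨hx0, hxL⟩ t ht
  set s₀ := t - (L - x) / (-lam)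
  have hfoot : lam * (s₀ - t) = L - x := by simp only [s₀]; field_simp [hlam.ne]; ring
  have hs₀T : T ≤ s₀ := by simp only [s₀]; linarith
  have hs₀t : s₀ ≤ t := sub_le_self t (div_nonneg (sub_nonneg.2 hxL) (neg_nonneg.2 hlam.le))
  have hinside : ∀ s ∈ Ioo s₀ t, (x + lam * (s - t), s) ∈ Ioo 0 L ×ˢ Ioi 0 := by
    intro s ⟨h₀, h₁⟩
    have := mul_lt_mul_of_neg_left (sub_lt_sub_right h₀ t) hlam
    have := mul_pos_of_neg_of_neg hlam (sub_neg.2 h₁)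
    exact ⟨⟨by linarith, by linarith⟩, show 0 < s by linarith⟩
  have key := transport_eq_along_characteristic (c := lam) hs₀t hC1.continuousOn
    (fun s ⟨h₀, h₁⟩ => by
      have := mul_le_mul_of_nonpos_left (sub_le_sub_right h₀ t) hlam.le
      have := mul_nonneg_of_nonpos_of_nonpos hlam.le (sub_nonpos.2 h₁)
      exact ⟨⟨by linarith, by linarith⟩, show (0:ℝ) ≤ s by linarith⟩)
    (fun s hs => (hC1.differentiableOn one_ne_zero).differentiableAt
      (mem_interior_iff_mem_nhds.mp (interior_Icc_prod_Ici 0 L 0 ▸ hinside s hs)))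
    (fun s hs => by
      obtain ⟨hy, hs0⟩ := hinside s hs
      rw [pde _ (Ioo_subset_Icc_self hy) s (Ioi_subset_Ici_self hs0),
        hf0 _ _ (hs₀T.trans hs.1.le)])
  rw [← key, hfoot, add_sub_cancel]
  exact bc s₀ hs₀T

/-- Cascade step of the finite-time stabilization argument:
for a forced transport equation at negative speed `λ` whose source `f` vanishes
for `t ≥ T` and whose downstream inflow `u(L,t)` is zero for `t ≥ T`, the
solution is extinguished after the additional transport time:
`u(x,t) = 0` for all `t ≥ T + (L − x)/(−λ)`. -/
theorem forced_transport_upstream_finite_time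
    (lam L T : ℝ) (hlam : lam < 0) (hL : 0 < L) (hT : 0 ≤ T)
    (f : ℝ → ℝ → ℝ)
    (hfC : ContinuousOn (fun p : ℝ × ℝ => f p.1 p.2) (Icc 0 L ×ˢ Ici 0))
    (hf0 : ∀ x t, T ≤ t → f x t = 0)
    (u : ℝ → ℝ → ℝ)
    (hC1 : ContDiffOn ℝ 1 (fun p : ℝ × ℝ => u p.1 p.2) (Icc 0 L ×ˢ Ici 0))
    (pde : ∀ x ∈ Icc (0:ℝ) L, ∀ t ∈ Ici (0:ℝ),
      deriv (fun s => u x s) t + lam * deriv (fun y => u y t) x = f x t)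
    (bc : ∀ t, T ≤ t → u L t = 0) :
    ∀ x ∈ Icc (0:ℝ) L, ∀ t, T + (L - x) / (-lam) ≤ t → u x t = 0 :=
  forced_transport_upstream_finite_time_general lam L T hlam hT f hf0 u hC1 pde bc
end
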